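/- Let k ∈ (−1,1) and η ∈ (0,π/2), and set p = √((1−k)/(1+k)). Define v : [0,∞) → ℝ by v(u) = (sin η/(2√(1−k)))·[ (U + √(1+U²))^p − (√(1+U²) − U)^p ], where U = √(1+k)·u/cos η. Then v(0) = 0 and for all u ≥ 0, v′(u) = √(sin²η + (1−k)v(u)²) / √(cos²η + (1+k)u²). In particular v′(0) = tan η, and the curve u ↦ (u, v(u)) is the unparametrized geodesic of the generalized Taub-NUT polytope metric emanating from the origin at angle η. -/

import Mathlib

/-!
With `U = √(1+k) u / cos η` one has `U + √(1+U²) = exp (arsinh U)` and `√(1+U²) - U = exp (-arsinh U)`,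
so `v = (sin η / √(1-k)) sinh (p arsinh U)`. Differentiating, the factor `p √(1+k) = √(1-k)` cancels,
and `cosh² = 1 + sinh²` turns `√(sin² η + (1-k) v²)` into `sin η cosh (p arsinh U)`, while
`√(cos² η + (1+k) u²) = cos η √(1+U²)`.
-/

open Real

/-- The explicit unparametrized geodesic of the generalized Taub-NUT polytope metric
emanating from the origin at angle `η`, written as a graph `u ↦ v(u)`. -/
noncomputable def geoGraph (k η : ℝ) (u : ℝ) : ℝ :=
  let U := Real.sqrt (1 + k) * u / Real.cos η
  let p := Real.sqrt ((1 - k) / (1 + k))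
  (Real.sin η / (2 * Real.sqrt (1 - k))) *
    ((U + Real.sqrt (1 + U ^ 2)) ^ p - (Real.sqrt (1 + U ^ 2) - U) ^ p)

namespace Real

theorem add_sqrt_one_add_sq_rpow_sub (x p : ℝ) :
    (x + √(1 + x ^ 2)) ^ p - (√(1 + x ^ 2) - x) ^ p = 2 * sinh (p * arsinh x) := by
  have hneg : √(1 + x ^ 2) - x = exp (-arsinh x) := by
    rw [← arsinh_neg, exp_arsinh, neg_sq]; ring
  rw [← exp_arsinh, hneg, ← exp_mul, ← exp_mul, sinh_eq]
  ring_nf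

theorem hasDerivAt_mul_sinh_mul_arsinh (c p α γ u : ℝ) :
    HasDerivAt (fun u => c * sinh (p * arsinh (α * u / γ)))
      (c * cosh (p * arsinh (α * u / γ)) * p * (α / γ) / √(1 + (α * u / γ) ^ 2)) u := by
  have hlin : HasDerivAt (fun u => α * u / γ) (α / γ) u := by
    simpa using ((hasDerivAt_id u).const_mul α).div_const γ
  refine ((((hasDerivAt_arsinh _).comp u hlin).const_mul p).sinh.const_mul c).congr_deriv ?_
  simp only [Function.comp_apply]
  ring

theorem hasDerivAt_mul_sinh_mul_arsinh_eq_sqrt_div_sqrt {σ β γ α p : ℝ} (hσ : 0 ≤ σ)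
    (hβ : β ≠ 0) (hγ : 0 < γ) (hp : p * α = β) (u : ℝ) :
    HasDerivAt (fun u => σ / β * sinh (p * arsinh (α * u / γ)))
      (√(σ ^ 2 + β ^ 2 * (σ / β * sinh (p * arsinh (α * u / γ))) ^ 2)
        / √(γ ^ 2 + α ^ 2 * u ^ 2)) u := by
  have hp₀ : p ≠ 0 := left_ne_zero_of_mul (hp ▸ hβ)
  have hα : α ≠ 0 := right_ne_zero_of_mul (hp ▸ hβ)
  have hnum (θ : ℝ) : √(σ ^ 2 + β ^ 2 * (σ / β * sinh θ) ^ 2) = σ * cosh θ := by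
    rw [← sqrt_sq (mul_nonneg hσ (cosh_pos θ).le)]
    congr 1
    field_simp
    rw [cosh_sq]
    ring
  have hden : √(γ ^ 2 + α ^ 2 * u ^ 2) = γ * √(1 + (α * u / γ) ^ 2) := by
    rw [← sqrt_sq hγ.le, ← sqrt_mul (sq_nonneg γ), sqrt_sq hγ.le]
    congr 1
    field_simp
  convert hasDerivAt_mul_sinh_mul_arsinh (σ / β) p α γ u using 1
  rw [hnum, hden, ← hp]
  field_simp

end Real

theorem geoGraph_eq (k η : ℝ) :
    geoGraph k η = fun u => sin η / √(1 - k) *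
      sinh (√((1 - k) / (1 + k)) * arsinh (√(1 + k) * u / cos η)) := by
  ext u
  rw [geoGraph, Real.add_sqrt_one_add_sq_rpow_sub]
  ring

theorem hasDerivAt_geoGraph {k η : ℝ} (hk : k ∈ Set.Ioo (-1 : ℝ) 1) (hs : 0 ≤ sin η)
    (hc : 0 < cos η) (u : ℝ) :
    HasDerivAt (geoGraph k η)
      (√(sin η ^ 2 + (1 - k) * geoGraph k η u ^ 2) / √(cos η ^ 2 + (1 + k) * u ^ 2)) u := by
  obtain ⟨hk₁, hk₂⟩ := hk
  have ha : 0 < √(1 + k) := sqrt_pos.2 (by linarith)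
  have hb : 0 < √(1 - k) := sqrt_pos.2 (by linarith)
  have hp : √((1 - k) / (1 + k)) * √(1 + k) = √(1 - k) := by
    rw [← sqrt_mul (div_nonneg (by linarith) (by linarith)), div_mul_cancel₀ _ (by linarith)]
  have h := hasDerivAt_mul_sinh_mul_arsinh_eq_sqrt_div_sqrt hs hb.ne' hc hp u
  rw [sq_sqrt (by linarith), sq_sqrt (by linarith)] at h
  rw [geoGraph_eq]
  exact h

/-- The curve `u ↦ (u, v(u))` satisfies `v(0) = 0` and the geodesic ODE
`v′ = √(sin²η + (1-k)v²)/√(cos²η + (1+k)u²)`; in particular `v′(0) = tan η`. -/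
theorem stmt_4 (k η : ℝ) (hk : k ∈ Set.Ioo (-1 : ℝ) 1)
    (hη : η ∈ Set.Ioo 0 (Real.pi / 2)) :
    geoGraph k η 0 = 0 ∧
    (∀ u : ℝ, 0 ≤ u →
      deriv (geoGraph k η) u
        = Real.sqrt (Real.sin η ^ 2 + (1 - k) * (geoGraph k η u) ^ 2)
            / Real.sqrt (Real.cos η ^ 2 + (1 + k) * u ^ 2)) ∧
    deriv (geoGraph k η) 0 = Real.tan η := by
  have hs : 0 ≤ sin η := sin_nonneg_of_nonneg_of_le_pi hη.1.le (by linarith [hη.2, pi_pos])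
  have hc : 0 < cos η := cos_pos_of_mem_Ioo ⟨by linarith [hη.1, pi_pos], hη.2⟩
  have hzero : geoGraph k η 0 = 0 := by simp [geoGraph_eq]
  have hode u := (hasDerivAt_geoGraph hk hs hc u).deriv
  refine ⟨hzero, fun u _ => hode u, ?_⟩
  simp [hode 0, hzero, sqrt_sq hs, sqrt_sq hc.le, tan_eq_sin_div_cos]
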